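/- arXiv:1305.2023 — 10 statements merged into one kernel-verified Lean document; each statement's English description precedes it below -/
import Mathlib

section
/- For probability distributions p, q on {1,...,d} with all q_i > 0, and any permutation π of {1,...,d}, the relative entropy satisfies H(p‖q∘π) ≥ H(p↓‖q↓), where p↓, q↓ denote p, q sorted in non-increasing order and H(p‖q) = Σ_i p_i (log p_i − log q_i). -/
/-!
The entropy term `∑ pᵢ log pᵢ` of `H(p‖q∘π)` does not change when `p` is sorted, so the claim
is that the cross term `∑ pᵢ log q_{π i}` is at most `∑ p↓ᵢ log q↓ᵢ`. Since `log` is increasing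
on the positive reals, `p↓` and `log ∘ q↓` are both non-increasing, and this is the rearrangement
inequality.
-/

/-- Classical relative entropy with convention `0 * log 0 = 0` (automatic since
`Real.log 0 = 0`). -/
noncomputable def relEnt {d : ℕ} (p q : Fin d → ℝ) : ℝ :=
  ∑ i, p i * (Real.log (p i) - Real.log (q i))

/-- Non-decreasing rearrangement `p↑`. -/
noncomputable def sortAsc {d : ℕ} (p : Fin d → ℝ) : Fin d → ℝ :=
  p ∘ Tuple.sort p

/-- Non-increasing rearrangement `p↓`. -/
noncomputable def sortDesc {d : ℕ} (p : Fin d → ℝ) : Fin d → ℝ :=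
  (p ∘ Tuple.sort p) ∘ Fin.rev

open Finset

section Sorting

variable {d : ℕ}

theorem sortDesc_eq_comp_perm (p : Fin d → ℝ) :
    sortDesc p = p ∘ (Fin.revPerm.trans (Tuple.sort p)) :=
  rfl

theorem antitone_sortDesc (p : Fin d → ℝ) : Antitone (sortDesc p) :=
  (Tuple.monotone_sort p).comp_antitone fun _ _ h => Fin.rev_le_rev.mpr h

theorem sum_comp_sortDesc (f : ℝ → ℝ) (p : Fin d → ℝ) :
    ∑ i, f (sortDesc p i) = ∑ i, f (p i) :=
  Equiv.sum_comp (Fin.revPerm.trans (Tuple.sort p)) (f ∘ p)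

theorem sum_mul_comp_perm_le_sum_mul_sortDesc {g : ℝ → ℝ} (p q : Fin d → ℝ)
    (hg : MonotoneOn g (Set.range q)) (π : Equiv.Perm (Fin d)) :
    ∑ i, p i * g (q (π i)) ≤ ∑ i, sortDesc p i * g (sortDesc q i) := by
  set σp : Equiv.Perm (Fin d) := Fin.revPerm.trans (Tuple.sort p)
  set σq : Equiv.Perm (Fin d) := Fin.revPerm.trans (Tuple.sort q)
  have hmono : Monovary (sortDesc p) (g ∘ sortDesc q) :=
    (antitone_sortDesc p).monovary fun i j hij =>
      hg ⟨_, rfl⟩ ⟨_, rfl⟩ (antitone_sortDesc q hij)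
  calc ∑ i, p i * g (q (π i))
      = ∑ i, p (σp i) * g (q (π (σp i))) :=
        (Equiv.sum_comp σp fun j => p j * g (q (π j))).symm
    _ = ∑ i, sortDesc p i * (g ∘ sortDesc q) ((σp.trans (π.trans σq.symm)) i) := by
        simp [sortDesc_eq_comp_perm, σp, σq]
    _ ≤ ∑ i, sortDesc p i * g (sortDesc q i) := hmono.sum_mul_comp_perm_le_sum_mul

end Sorting

theorem relEnt_eq_sub {d : ℕ} (p q : Fin d → ℝ) :
    relEnt p q = ∑ i, p i * Real.log (p i) - ∑ i, p i * Real.log (q i) := by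
  simp only [relEnt, mul_sub, sum_sub_distrib]

theorem stmt_0_general {d : ℕ} (p q : Fin d → ℝ)
    (hq : ∀ i, 0 < q i)
    (π : Equiv.Perm (Fin d)) :
    relEnt (sortDesc p) (sortDesc q) ≤ relEnt p (q ∘ π) := by
  have hlog : MonotoneOn Real.log (Set.range q) :=
    Real.strictMonoOn_log.monotoneOn.mono (Set.range_subset_iff.mpr hq)
  have hcross := sum_mul_comp_perm_le_sum_mul_sortDesc p q hlog π
  rw [relEnt_eq_sub, relEnt_eq_sub, sum_comp_sortDesc (fun x => x * Real.log x)]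
  simp only [Function.comp_apply]
  linarith

theorem stmt_0 {d : ℕ} (p q : Fin d → ℝ)
    (hp : ∀ i, 0 ≤ p i) (hq : ∀ i, 0 < q i)
    (hps : ∑ i, p i = 1) (hqs : ∑ i, q i = 1)
    (π : Equiv.Perm (Fin d)) :
    relEnt (sortDesc p) (sortDesc q) ≤ relEnt p (q ∘ π) :=
  stmt_0_general p q hq π
end

section
/- For probability distributions p, q on {1,...,d} with all q_i > 0, and any permutation π, H(p‖q∘π) ≤ H(p↓‖q↑), where q↑ is q sorted in non-decreasing order and p↓ is p sorted in non-increasing order. -/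
theorem stmt_1 {d : ℕ} (p q : Fin d → ℝ)
    (hp : ∀ i, 0 ≤ p i) (hq : ∀ i, 0 < q i)
    (hps : ∑ i, p i = 1) (hqs : ∑ i, q i = 1)
    (π : Equiv.Perm (Fin d)) :
    relEnt p (q ∘ π) ≤ relEnt (sortDesc p) (sortAsc q) := by
  set s : Equiv.Perm (Fin d) := Tuple.sort p
  set t : Equiv.Perm (Fin d) := Tuple.sort q
  set e : Equiv.Perm (Fin d) := Fin.revPerm.trans s with he
  set a : Fin d → ℝ := sortDesc p with ha
  set b : Fin d → ℝ := fun i => Real.log (sortAsc q i) with hb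
  have hae : ∀ i, a i = p (e i) := fun i => rfl
  -- a is antitone
  have hanti : Antitone a := by
    intro i j hij
    exact Tuple.monotone_sort p (Fin.rev_le_rev.mpr hij)
  -- b is monotone
  have hmono : Monotone b := by
    intro i j hij
    exact Real.log_le_log (hq _) (Tuple.monotone_sort q hij)
  have hav : Antivary a b := by
    intro i j hbij
    exact hanti (le_of_not_ge fun h => absurd (hmono h) (not_le.mpr hbij))
  -- entropy term equality
  have h1 : ∑ i, a i * Real.log (a i) = ∑ i, p i * Real.log (p i) := by
    exact Equiv.sum_comp e (fun j => p j * Real.log (p j))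
  -- cross term inequality
  set σ : Equiv.Perm (Fin d) := e.trans (π.trans t.symm) with hσ
  have h2 : ∑ i, a i * b i ≤ ∑ i, p i * Real.log (q (π i)) := by
    have := hav.sum_mul_le_sum_mul_comp_perm (σ := σ)
    calc ∑ i, a i * b i ≤ ∑ i, a i * b (σ i) := this
      _ = ∑ i, p i * Real.log (q (π i)) := by
          rw [← Equiv.sum_comp e.symm (fun i => a i * b (σ i))]
          refine Finset.sum_congr rfl fun j _ => ?_
          have h3 : a (e.symm j) = p j := by rw [hae, Equiv.apply_symm_apply]
          have h4 : b (σ (e.symm j)) = Real.log (q (π j)) := by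
            simp only [hσ, Equiv.trans_apply, Equiv.apply_symm_apply, hb, sortAsc]
            congr 1
            exact congrArg q (Equiv.apply_symm_apply t _)
          rw [h3, h4]
  simp only [relEnt, mul_sub]
  rw [Finset.sum_sub_distrib, Finset.sum_sub_distrib]
  have h1' : ∑ i, sortDesc p i * Real.log (sortDesc p i) = ∑ i, p i * Real.log (p i) := h1
  rw [h1']
  apply sub_le_sub_left
  exact h2
end

section
/- For probability distributions p, q with q strictly positive, the maximum over all permutations π of H(p‖q∘π) equals H(p↓‖q↑), and this maximum is attained. -/
theorem stmt_3 {d : ℕ} (p q : Fin d → ℝ)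
    (hp : ∀ i, 0 ≤ p i) (hq : ∀ i, 0 < q i)
    (hps : ∑ i, p i = 1) (hqs : ∑ i, q i = 1) :
    (∀ π : Equiv.Perm (Fin d), relEnt p (q ∘ π) ≤ relEnt (sortDesc p) (sortAsc q)) ∧
    (∃ π : Equiv.Perm (Fin d), relEnt p (q ∘ π) = relEnt (sortDesc p) (sortAsc q)) := by
  set σp : Equiv.Perm (Fin d) := Tuple.sort p with hσp
  set σq : Equiv.Perm (Fin d) := Tuple.sort q with hσq
  set τ : Equiv.Perm (Fin d) := (Fin.revPerm).trans σp with hτ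
  have hτapp : ∀ i, τ i = σp (Fin.rev i) := fun i => rfl
  have hdesc : ∀ i, sortDesc p i = p (τ i) := fun i => rfl
  have hasc : ∀ i, sortAsc q i = q (σq i) := fun i => rfl
  -- antitone of sortDesc p
  have hf : Antitone (sortDesc p) := by
    intro i j hij
    exact Tuple.monotone_sort p (Fin.rev_le_rev.mpr hij)
  -- monotone of log ∘ sortAsc q
  have hg : Monotone (fun i => Real.log (sortAsc q i)) := by
    intro i j hij
    exact Real.log_le_log (hq _) (Tuple.monotone_sort q hij)
  have hanti : Antivary (sortDesc p) (fun i => Real.log (sortAsc q i)) := by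
    intro i j hij
    refine hf (le_of_not_gt fun hji => absurd hij (not_lt.2 (hg hji.le)))
  -- reindexing lemma
  have key : ∀ π : Equiv.Perm (Fin d),
      relEnt p (q ∘ π) = ∑ i, sortDesc p i * (Real.log (sortDesc p i)
        - Real.log (q (π (τ i)))) := by
    intro π
    rw [relEnt]
    rw [← Equiv.sum_comp τ (fun i => p i * (Real.log (p i) - Real.log ((q ∘ π) i)))]
    simp [hdesc, Function.comp]
  constructor
  · intro π
    rw [key π, relEnt]
    have h1 : ∑ i, sortDesc p i * Real.log (sortAsc q i)
        ≤ ∑ i, sortDesc p i * Real.log (q (π (τ i))) := by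
      have := hanti.sum_mul_le_sum_mul_comp_perm
        (σ := τ.trans (π.trans σq.symm))
      simpa [hasc, Equiv.apply_symm_apply] using this
    simp only [mul_sub]
    rw [Finset.sum_sub_distrib, Finset.sum_sub_distrib]
    linarith
  · refine ⟨τ.symm.trans σq, ?_⟩
    rw [key, relEnt]
    simp [hasc]
end

section
/- Let ρ, σ be density matrices on ℂ^d with σ positive definite. If U₀ is a unitary at which U ↦ S(UρU*‖σ) := −S(ρ) − Tr(UρU* log σ) attains a local extremum on the unitary group, then U₀ρU₀* commutes with σ. -/
open Matrix ComplexOrder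

/-- Matrix logarithm of a Hermitian matrix via its spectral decomposition
(junk value `0` on non-Hermitian matrices). -/
noncomputable def matLog {n : Type*} [Fintype n] [DecidableEq n]
    (A : Matrix n n ℂ) : Matrix n n ℂ :=
  if h : A.IsHermitian then
    (h.eigenvectorUnitary : Matrix n n ℂ) *
      Matrix.diagonal (fun i => (Real.log (h.eigenvalues i) : ℂ)) *
      (star h.eigenvectorUnitary : Matrix n n ℂ)
  else 0

/-- Eigenvalue vector of a Hermitian matrix (junk value `0` otherwise). -/
noncomputable def evals {n : Type*} [Fintype n] [DecidableEq n]
    (A : Matrix n n ℂ) : n → ℝ :=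
  if h : A.IsHermitian then h.eigenvalues else 0

/-- Quantum relative entropy `S(ρ‖σ) = Tr (ρ (log ρ − log σ))`. -/
noncomputable def qRelEnt {n : Type*} [Fintype n] [DecidableEq n]
    (ρ σ : Matrix n n ℂ) : ℝ :=
  ((ρ * (matLog ρ - matLog σ)).trace).re

/-- von Neumann entropy `S(ρ) = −Tr (ρ log ρ)`. -/
noncomputable def vnEnt {n : Type*} [Fintype n] [DecidableEq n]
    (ρ : Matrix n n ℂ) : ℝ :=
  -((ρ * matLog ρ).trace).re

/-- Partial trace over the second (B) factor. -/
noncomputable def ptraceB {a b : ℕ}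
    (ρ : Matrix (Fin a × Fin b) (Fin a × Fin b) ℂ) : Matrix (Fin a) (Fin a) ℂ :=
  fun i j => ∑ k, ρ (i, k) (j, k)

/-- Partial trace over the first (A) factor. -/
noncomputable def ptraceA {a b : ℕ}
    (ρ : Matrix (Fin a × Fin b) (Fin a × Fin b) ℂ) : Matrix (Fin b) (Fin b) ℂ :=
  fun i j => ∑ k, ρ (k, i) (k, j)

/-- Eigenvalues of a matrix on a bipartite space, reindexed by `Fin (a*b)`. -/
noncomputable def evalsP {a b : ℕ}
    (ρ : Matrix (Fin a × Fin b) (Fin a × Fin b) ℂ) : Fin (a * b) → ℝ :=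
  evals ρ ∘ finProdFinEquiv.symm

/-! Put `A = U₀ ρ U₀ᴴ` and `K = A log σ - log σ A`, a skew-Hermitian matrix. Along the unitary
curve `t ↦ exp (t K) U₀` the objective is `const - Re Tr (e^{tK} A e^{-tK} log σ)`, whose derivative
at `0` is `-Re Tr ((K A - A K) log σ) = -Re Tr (K K) = Tr (Kᴴ K)`. At a local extremum this
vanishes, so `K = 0`: `A` commutes with `log σ`, hence with `σ = exp (log σ)`. -/

open NormedSpace

theorem IsSelfAdjoint.mul_sub_mul_mem_skewAdjoint {R : Type*} [Ring R] [StarRing R] {a b : R}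
    (ha : IsSelfAdjoint a) (hb : IsSelfAdjoint b) : a * b - b * a ∈ skewAdjoint R := by
  rw [skewAdjoint.mem_iff, star_sub, star_mul, star_mul, ha.star_eq, hb.star_eq, neg_sub]

theorem IsLocalExtrOn.hasDerivAt_comp_eq_zero {E : Type*} [TopologicalSpace E] {f : E → ℝ}
    {s : Set E} {a : E} (hf : IsLocalExtrOn f s a) {γ : ℝ → E} (hγ : ContinuousAt γ 0)
    (hγ0 : γ 0 = a) (hγs : ∀ t, γ t ∈ s) {f' : ℝ} (hd : HasDerivAt (f ∘ γ) f' 0) : f' = 0 := by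
  subst hγ0
  have hlim : Filter.Tendsto γ (nhds 0) (nhdsWithin (γ 0) s) :=
    tendsto_nhdsWithin_iff.mpr ⟨hγ, Filter.Eventually.of_forall hγs⟩
  exact IsLocalExtr.hasDerivAt_eq_zero (hf.comp_tendsto hlim) hd

theorem hasDerivAt_exp_smul_mul_mul_exp_neg_smul {𝔸 : Type*} [NormedRing 𝔸] [NormedAlgebra ℝ 𝔸]
    [CompleteSpace 𝔸] (K B : 𝔸) :
    HasDerivAt (fun t : ℝ => exp (t • K) * B * exp (-(t • K))) (K * B - B * K) 0 := by
  have hexp (X : 𝔸) : HasDerivAt (fun t : ℝ => exp (t • X)) X 0 := by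
    simpa using hasDerivAt_exp_smul_const' (𝕂 := ℝ) X 0
  simp_rw [← smul_neg]
  refine (((hexp K).mul_const B).mul (hexp (-K))).congr_deriv ?_
  simp [sub_eq_add_neg]

theorem exp_smul_mul_mul_star {𝔸 : Type*} [Ring 𝔸] [TopologicalSpace 𝔸] [IsTopologicalRing 𝔸]
    [T2Space 𝔸] [StarRing 𝔸] [ContinuousStar 𝔸] [Algebra ℝ 𝔸] [StarModule ℝ 𝔸] {K : 𝔸}
    (hK : K ∈ skewAdjoint 𝔸) (u B : 𝔸) (t : ℝ) :
    exp (t • K) * u * B * star (exp (t • K) * u) =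
      exp (t • K) * (u * B * star u) * exp (-(t • K)) := by
  rw [star_mul, star_exp, star_smul, star_trivial t, skewAdjoint.mem_iff.mp hK, smul_neg]
  simp only [mul_assoc]

namespace Matrix

section Trace

variable {n : Type*} [Fintype n]

theorem trace_commutator_mul {R : Type*} [CommRing R] (K A L : Matrix n n R) :
    ((K * A - A * K) * L).trace = (K * (A * L - L * A)).trace := by
  rw [sub_mul, mul_sub, trace_sub, trace_sub, mul_assoc, mul_assoc, trace_mul_comm A, mul_assoc]

theorem eq_zero_of_re_trace_mul_self_eq_zero {K : Matrix n n ℂ}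
    (hK : K ∈ skewAdjoint (Matrix n n ℂ)) (h : (K * K).trace.re = 0) : K = 0 := by
  replace hK : Kᴴ = -K := skewAdjoint.mem_iff.mp hK
  have hnonneg := (posSemidef_conjTranspose_mul_self K).trace_nonneg
  rw [hK, neg_mul, trace_neg] at hnonneg
  refine trace_conjTranspose_mul_self_eq_zero_iff.mp ?_
  rw [hK, neg_mul, trace_neg, neg_eq_zero]
  exact Complex.ext h (by simpa using (Complex.nonneg_iff.mp hnonneg).2.symm)

end Trace

variable {n : Type*} [Fintype n] [DecidableEq n]

@[fun_prop]
theorem continuous_exp {𝕜 : Type*} [RCLike 𝕜] :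
    Continuous (exp : Matrix n n 𝕜 → Matrix n n 𝕜) :=
  open scoped Norms.Operator in exp_continuous

theorem exp_mem_unitaryGroup {𝕜 : Type*} [RCLike 𝕜] {K : Matrix n n 𝕜}
    (hK : K ∈ skewAdjoint (Matrix n n 𝕜)) : exp K ∈ unitaryGroup n 𝕜 := by
  rw [mem_unitaryGroup_iff', star_eq_conjTranspose, ← exp_conjTranspose,
    ← star_eq_conjTranspose, skewAdjoint.mem_iff.mp hK, exp_neg]
  exact nonsing_inv_mul _ ((isUnit_iff_isUnit_det _).mp (isUnit_exp K))

theorem hasDerivAt_re_trace_exp_conj_mul (K B L : Matrix n n ℂ) :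
    HasDerivAt (fun t : ℝ => ((exp (t • K) * B * exp (-(t • K)) * L).trace).re)
      (((K * B - B * K) * L).trace.re) 0 :=
  open scoped Norms.Operator in
  let reTrace : Matrix n n ℂ →L[ℝ] ℝ := Complex.reCLM.comp
    (LinearMap.toContinuousLinearMap ((traceLinearMap n ℂ ℂ).restrictScalars ℝ))
  reTrace.hasFDerivAt.comp_hasDerivAt 0 ((hasDerivAt_exp_smul_mul_mul_exp_neg_smul K B).mul_const L)

theorem re_trace_commutator_mul_eq_zero_of_isLocalExtrOn {ρ L U₀ K : Matrix n n ℂ}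
    (hU₀ : U₀ ∈ unitaryGroup n ℂ)
    (hext : IsLocalExtrOn (fun U => ((U * ρ * Uᴴ * L).trace).re) (unitaryGroup n ℂ) U₀)
    (hK : K ∈ skewAdjoint (Matrix n n ℂ)) :
    (((K * (U₀ * ρ * U₀ᴴ) - U₀ * ρ * U₀ᴴ * K) * L).trace).re = 0 := by
  refine hext.hasDerivAt_comp_eq_zero (γ := fun t : ℝ => exp (t • K) * U₀) (by fun_prop)
    (by simp) (fun t => mul_mem (exp_mem_unitaryGroup (skewAdjoint.smul_mem t hK)) hU₀) ?_
  convert hasDerivAt_re_trace_exp_conj_mul K (U₀ * ρ * U₀ᴴ) L using 1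
  funext t
  simp only [Function.comp_apply, ← star_eq_conjTranspose, exp_smul_mul_mul_star hK]

theorem isHermitian_matLog (A : Matrix n n ℂ) : (matLog A).IsHermitian := by
  rw [matLog]
  split_ifs with hA
  · exact isHermitian_mul_mul_conjTranspose _ (isHermitian_diagonal_of_self_adjoint _
      (funext fun i => Complex.conj_ofReal _))
  · exact isHermitian_zero

theorem exp_matLog {A : Matrix n n ℂ} (hA : A.PosDef) : exp (matLog A) = A := by
  have hu := hA.1.eigenvectorUnitary.2
  conv_rhs => rw [hA.1.spectral_theorem, Unitary.conjStarAlgAut_apply]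
  rw [matLog, dif_pos hA.1, ← inv_eq_left_inv (mem_unitaryGroup_iff'.mp hu),
    exp_conj _ _ Unitary.isUnit_coe, exp_diagonal, Pi.exp_def]
  simp_rw [← Complex.exp_eq_exp_ℂ, ← Complex.ofReal_exp, Real.exp_log (hA.eigenvalues_pos _)]
  rfl

theorem commute_of_commute_matLog {A B : Matrix n n ℂ} (hA : A.PosDef)
    (h : Commute B (matLog A)) : Commute B A := by
  simpa only [exp_matLog hA] using h.exp_right

end Matrix

theorem stmt_5_general {d : ℕ} (ρ σ : Matrix (Fin d) (Fin d) ℂ)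
    (hρ : ρ.PosSemidef)
    (hσ : σ.PosDef)
    (U₀ : Matrix (Fin d) (Fin d) ℂ) (hU₀ : U₀ ∈ Matrix.unitaryGroup (Fin d) ℂ)
    (hext : IsLocalExtrOn
      (fun U : Matrix (Fin d) (Fin d) ℂ =>
        -(vnEnt ρ) - ((U * ρ * Uᴴ * matLog σ).trace).re)
      (Matrix.unitaryGroup (Fin d) ℂ : Set (Matrix (Fin d) (Fin d) ℂ)) U₀) :
    (U₀ * ρ * U₀ᴴ) * σ = σ * (U₀ * ρ * U₀ᴴ) := by
  set A := U₀ * ρ * U₀ᴴ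
  set K := A * matLog σ - matLog σ * A
  have hK : K ∈ skewAdjoint (Matrix (Fin d) (Fin d) ℂ) :=
    (isHermitian_mul_mul_conjTranspose U₀ hρ.1).isSelfAdjoint.mul_sub_mul_mem_skewAdjoint
      (isHermitian_matLog σ).isSelfAdjoint
  have hextTrace : IsLocalExtrOn (fun U => ((U * ρ * Uᴴ * matLog σ).trace).re)
      (unitaryGroup (Fin d) ℂ) U₀ := by
    simpa [Function.comp_def] using hext.comp_antitone (antitone_const_tsub (c := -vnEnt ρ))
  have hvar := re_trace_commutator_mul_eq_zero_of_isLocalExtrOn hU₀ hextTrace hK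
  rw [trace_commutator_mul] at hvar
  have hK0 : K = 0 := eq_zero_of_re_trace_mul_self_eq_zero hK hvar
  exact (commute_of_commute_matLog hσ (sub_eq_zero.mp hK0)).eq

theorem stmt_5 {d : ℕ} (ρ σ : Matrix (Fin d) (Fin d) ℂ)
    (hρ : ρ.PosSemidef) (hρ1 : ρ.trace = 1)
    (hσ : σ.PosDef) (hσ1 : σ.trace = 1)
    (U₀ : Matrix (Fin d) (Fin d) ℂ) (hU₀ : U₀ ∈ Matrix.unitaryGroup (Fin d) ℂ)
    (hext : IsLocalExtrOn
      (fun U : Matrix (Fin d) (Fin d) ℂ =>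
        -(vnEnt ρ) - ((U * ρ * Uᴴ * matLog σ).trace).re)
      (Matrix.unitaryGroup (Fin d) ℂ : Set (Matrix (Fin d) (Fin d) ℂ)) U₀) :
    (U₀ * ρ * U₀ᴴ) * σ = σ * (U₀ * ρ * U₀ᴴ) :=
  stmt_5_general ρ σ hρ hσ U₀ hU₀ hext
end

section
/- For any density matrices ρ, σ on ℂ^d with σ positive definite, H(λ↓(ρ)‖λ↓(σ)) ≤ S(ρ‖σ) ≤ H(λ↓(ρ)‖λ↑(σ)), where λ↓ (λ↑) denotes eigenvalues in non-increasing (non-decreasing) order. -/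
open Matrix ComplexOrder

section Aux

lemma trace_conj_diag {d : ℕ} (U V : Matrix (Fin d) (Fin d) ℂ) (p L : Fin d → ℝ) :
    ((U * Matrix.diagonal (fun i => (p i : ℂ)) * star U) *
      (V * Matrix.diagonal (fun i => (L i : ℂ)) * star V)).trace.re
    = ∑ i, ∑ j, p i * L j * Complex.normSq ((star U * V) i j) := by
  set Dp := Matrix.diagonal (fun i => (p i : ℂ))
  set DL := Matrix.diagonal (fun i => (L i : ℂ))
  set W := star U * V with hW
  have h1 : (U * Dp * star U) * (V * DL * star V)
      = U * (Dp * W * DL * star V) := by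
    simp only [hW, Matrix.mul_assoc]
  have h2 : (Dp * W * DL * star V) * U = Dp * W * DL * star W := by
    simp only [hW, Matrix.star_mul, star_star, Matrix.mul_assoc]
  rw [h1, Matrix.trace_mul_comm, h2]
  have h3 : ∀ k j : Fin d, (Dp * W * DL) k j = (p k : ℂ) * W k j * (L j : ℂ) := by
    intro k j
    simp [Dp, DL, Matrix.mul_diagonal, Matrix.diagonal_mul]
  have h4 : (Dp * W * DL * star W).trace
      = ∑ k, ∑ j, ((p k * L j * Complex.normSq (W k j) : ℝ) : ℂ) := by
    rw [Matrix.trace]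
    refine Finset.sum_congr rfl fun k _ => ?_
    rw [Matrix.diag, Matrix.mul_apply]
    refine Finset.sum_congr rfl fun j _ => ?_
    rw [h3, Matrix.star_apply, RCLike.star_def]
    have : (p k : ℂ) * W k j * (L j : ℂ) * (starRingEnd ℂ) (W k j)
        = (p k : ℂ) * (L j : ℂ) * (W k j * (starRingEnd ℂ) (W k j)) := by ring
    rw [this, Complex.mul_conj]
    push_cast
    ring
  rw [h4, Complex.re_sum]
  refine Finset.sum_congr rfl fun k _ => ?_
  rw [Complex.re_sum]
  refine Finset.sum_congr rfl fun j _ => ?_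
  simp

lemma trace_mul_matLog {d : ℕ} {A B : Matrix (Fin d) (Fin d) ℂ}
    (hA : A.IsHermitian) (hB : B.IsHermitian) :
    ((A * matLog B).trace).re
    = ∑ i, ∑ j, hA.eigenvalues i * Real.log (hB.eigenvalues j) *
        Complex.normSq (((star hA.eigenvectorUnitary : Matrix (Fin d) (Fin d) ℂ) *
          (hB.eigenvectorUnitary : Matrix (Fin d) (Fin d) ℂ)) i j) := by
  rw [matLog, dif_pos hB]
  nth_rewrite 1 [hA.spectral_theorem]
  exact trace_conj_diag _ _ _ _

lemma trace_matLog_self {d : ℕ} {A : Matrix (Fin d) (Fin d) ℂ} (hA : A.IsHermitian) :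
    ((A * matLog A).trace).re = ∑ i, hA.eigenvalues i * Real.log (hA.eigenvalues i) := by
  rw [trace_mul_matLog hA hA]
  have h1 : (star (hA.eigenvectorUnitary : Matrix (Fin d) (Fin d) ℂ)) *
      (hA.eigenvectorUnitary : Matrix (Fin d) (Fin d) ℂ) = 1 :=
    Matrix.mem_unitaryGroup_iff'.mp hA.eigenvectorUnitary.2
  rw [h1]
  refine Finset.sum_congr rfl fun i _ => ?_
  rw [Finset.sum_eq_single i]
  · simp
  · intro j _ hj
    simp [Matrix.one_apply, Ne.symm hj]
  · simp

lemma normSq_doublyStochastic {d : ℕ} (W : Matrix (Fin d) (Fin d) ℂ)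
    (hW : W ∈ Matrix.unitaryGroup (Fin d) ℂ) :
    (Matrix.of fun i j => Complex.normSq (W i j)) ∈ doublyStochastic ℝ (Fin d) := by
  rw [mem_doublyStochastic_iff_sum]
  refine ⟨fun i j => Complex.normSq_nonneg _, fun i => ?_, fun j => ?_⟩
  · have h := Matrix.mem_unitaryGroup_iff.mp hW
    have h1 : (W * star W) i i = 1 := by rw [h]; simp
    rw [Matrix.mul_apply] at h1
    have h2 : ∑ j, ((Complex.normSq (W i j) : ℝ) : ℂ) = (1 : ℂ) := by
      rw [← h1]
      refine Finset.sum_congr rfl fun j _ => ?_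
      rw [Matrix.star_apply, RCLike.star_def, Complex.mul_conj]
    rw [← Complex.ofReal_sum] at h2
    have := Complex.ofReal_injective (h2.trans (Complex.ofReal_one).symm)
    simpa using this
  · have h := Matrix.mem_unitaryGroup_iff'.mp hW
    have h1 : (star W * W) j j = 1 := by rw [h]; simp
    rw [Matrix.mul_apply] at h1
    have h2 : ∑ i, ((Complex.normSq (W i j) : ℝ) : ℂ) = (1 : ℂ) := by
      rw [← h1]
      refine Finset.sum_congr rfl fun i _ => ?_
      rw [Matrix.star_apply, RCLike.star_def, mul_comm, Complex.mul_conj]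
    rw [← Complex.ofReal_sum] at h2
    have := Complex.ofReal_injective (h2.trans (Complex.ofReal_one).symm)
    simpa using this

lemma perm_sum_le {d : ℕ} (p L a b : Fin d → ℝ) (e f : Equiv.Perm (Fin d))
    (ha : ∀ i, a i = p (e i)) (hb : ∀ i, b i = L (f i)) (hab : Monovary a b)
    (σ : Equiv.Perm (Fin d)) :
    ∑ i, p i * L (σ i) ≤ ∑ i, a i * b i := by
  have h1 : ∑ i, p i * L (σ i) = ∑ i, a i * b ((e.trans (σ.trans f.symm)) i) := by
    rw [← Equiv.sum_comp e (fun i => p i * L (σ i))]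
    refine Finset.sum_congr rfl fun i _ => ?_
    simp [ha, hb]
  rw [h1]
  exact hab.sum_mul_comp_perm_le_sum_mul

lemma le_perm_sum {d : ℕ} (p L a c : Fin d → ℝ) (e f : Equiv.Perm (Fin d))
    (ha : ∀ i, a i = p (e i)) (hc : ∀ i, c i = L (f i)) (hac : Antivary a c)
    (σ : Equiv.Perm (Fin d)) :
    ∑ i, a i * c i ≤ ∑ i, p i * L (σ i) := by
  have h1 : ∑ i, p i * L (σ i) = ∑ i, a i * c ((e.trans (σ.trans f.symm)) i) := by
    rw [← Equiv.sum_comp e (fun i => p i * L (σ i))]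
    refine Finset.sum_congr rfl fun i _ => ?_
    simp [ha, hc]
  rw [h1]
  exact hac.sum_mul_le_sum_mul_comp_perm

lemma ds_pairing_bounds {d : ℕ} {B : Matrix (Fin d) (Fin d) ℝ}
    (hB : B ∈ doublyStochastic ℝ (Fin d)) (x : Fin d → Fin d → ℝ) {lo hi : ℝ}
    (hlo : ∀ σ : Equiv.Perm (Fin d), lo ≤ ∑ i, x i (σ i))
    (hhi : ∀ σ : Equiv.Perm (Fin d), ∑ i, x i (σ i) ≤ hi) :
    lo ≤ (∑ i, ∑ j, B i j * x i j) ∧ (∑ i, ∑ j, B i j * x i j) ≤ hi := by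
  obtain ⟨w, hw0, hw1, hw3⟩ := exists_eq_sum_perm_of_mem_doublyStochastic hB
  have hBij : ∀ i j, B i j = ∑ σ : Equiv.Perm (Fin d), w σ * σ.permMatrix ℝ i j := by
    intro i j
    rw [← hw3]
    simp [Matrix.sum_apply]
  have inner : ∀ (σ : Equiv.Perm (Fin d)) (i : Fin d),
      ∑ j, w σ * σ.permMatrix ℝ i j * x i j = w σ * x i (σ i) := by
    intro σ i
    rw [Finset.sum_eq_single (σ i)]
    · simp [Equiv.Perm.permMatrix, PEquiv.toMatrix_apply, Equiv.toPEquiv_apply]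
    · intro j _ hj
      simp [Equiv.Perm.permMatrix, PEquiv.toMatrix_apply, Equiv.toPEquiv_apply, Ne.symm hj]
    · simp
  have key : (∑ i, ∑ j, B i j * x i j)
      = ∑ σ : Equiv.Perm (Fin d), w σ * ∑ i, x i (σ i) := by
    have h2 : ∀ i : Fin d, ∑ j, B i j * x i j
        = ∑ σ : Equiv.Perm (Fin d), w σ * x i (σ i) := by
      intro i
      simp only [hBij, Finset.sum_mul]
      rw [Finset.sum_comm]
      exact Finset.sum_congr rfl fun σ _ => inner σ i
    simp only [h2]
    rw [Finset.sum_comm]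
    exact Finset.sum_congr rfl fun σ _ => (Finset.mul_sum _ _ _).symm
  constructor
  · rw [key]
    calc lo = ∑ σ : Equiv.Perm (Fin d), w σ * lo := by rw [← Finset.sum_mul, hw1, one_mul]
    _ ≤ _ := Finset.sum_le_sum fun σ _ => mul_le_mul_of_nonneg_left (hlo σ) (hw0 σ)
  · rw [key]
    calc ∑ σ : Equiv.Perm (Fin d), w σ * ∑ i, x i (σ i)
        ≤ ∑ σ : Equiv.Perm (Fin d), w σ * hi :=
          Finset.sum_le_sum fun σ _ => mul_le_mul_of_nonneg_left (hhi σ) (hw0 σ)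
    _ = hi := by rw [← Finset.sum_mul, hw1, one_mul]

end Aux

theorem stmt_7 {d : ℕ} (ρ σ : Matrix (Fin d) (Fin d) ℂ)
    (hρ : ρ.PosSemidef) (hρ1 : ρ.trace = 1)
    (hσ : σ.PosDef) (hσ1 : σ.trace = 1) :
    relEnt (sortDesc (evals ρ)) (sortDesc (evals σ)) ≤ qRelEnt ρ σ ∧
    qRelEnt ρ σ ≤ relEnt (sortDesc (evals ρ)) (sortAsc (evals σ)) := by
  have hρh : ρ.IsHermitian := hρ.1
  have hσh : σ.IsHermitian := hσ.1
  set p : Fin d → ℝ := evals ρ with hp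
  set q : Fin d → ℝ := evals σ with hq
  have hpe : p = hρh.eigenvalues := by rw [hp, evals, dif_pos hρh]
  have hqe : q = hσh.eigenvalues := by rw [hq, evals, dif_pos hσh]
  have hqpos : ∀ k, 0 < q k := by
    intro k; rw [hqe]; exact hσ.eigenvalues_pos k
  set L : Fin d → ℝ := fun i => Real.log (q i) with hL
  set e : Equiv.Perm (Fin d) := Fin.revPerm.trans (Tuple.sort p) with he
  set f : Equiv.Perm (Fin d) := Fin.revPerm.trans (Tuple.sort q) with hf
  have ha : ∀ i, sortDesc p i = p (e i) := fun i => rfl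
  have hb : ∀ i, Real.log (sortDesc q i) = L (f i) := fun i => rfl
  have hc : ∀ i, Real.log (sortAsc q i) = L (Tuple.sort q i) := fun i => rfl
  -- monotonicity facts
  have hamono : Antitone (sortDesc p) := by
    intro i j hij
    exact Tuple.monotone_sort p (Fin.rev_le_rev.mpr hij)
  have hcmono : Monotone (fun i => Real.log (sortAsc q i)) := by
    intro i j hij
    exact Real.log_le_log (hqpos _) (Tuple.monotone_sort q hij)
  have hbmono : Antitone (fun i => Real.log (sortDesc q i)) := by
    intro i j hij
    exact Real.log_le_log (hqpos _) (Tuple.monotone_sort q (Fin.rev_le_rev.mpr hij))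
  have monab : Monovary (sortDesc p) (fun i => Real.log (sortDesc q i)) :=
    hamono.monovary hbmono
  have antac : Antivary (sortDesc p) (fun i => Real.log (sortAsc q i)) :=
    hamono.antivary hcmono
  -- the doubly stochastic matrix
  set W : Matrix (Fin d) (Fin d) ℂ :=
    (star hρh.eigenvectorUnitary : Matrix (Fin d) (Fin d) ℂ) *
      (hσh.eigenvectorUnitary : Matrix (Fin d) (Fin d) ℂ) with hW
  have hWmem : W ∈ Matrix.unitaryGroup (Fin d) ℂ :=
    mul_mem (Unitary.star_mem hρh.eigenvectorUnitary.2) hσh.eigenvectorUnitary.2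
  have hBds := normSq_doublyStochastic W hWmem
  -- the cross trace
  have hcross : ((ρ * matLog σ).trace).re
      = ∑ i, ∑ j, (Matrix.of fun i j => Complex.normSq (W i j)) i j * (p i * L j) := by
    rw [trace_mul_matLog hρh hσh]
    refine Finset.sum_congr rfl fun i _ => Finset.sum_congr rfl fun j _ => ?_
    rw [hpe, hL, hqe]
    simp only [Matrix.of_apply, hW]
    ring
  -- bounds on the cross trace
  have bounds := ds_pairing_bounds hBds (fun i j => p i * L j)
    (lo := ∑ i, sortDesc p i * Real.log (sortAsc q i))
    (hi := ∑ i, sortDesc p i * Real.log (sortDesc q i))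
    (fun σ => le_perm_sum p L (sortDesc p) (fun i => Real.log (sortAsc q i))
      e (Tuple.sort q) ha hc antac σ)
    (fun σ => perm_sum_le p L (sortDesc p) (fun i => Real.log (sortDesc q i))
      e f ha hb monab σ)
  -- the self trace
  have hself : ((ρ * matLog ρ).trace).re = ∑ i, p i * Real.log (p i) := by
    rw [trace_matLog_self hρh, hpe]
  have hsum_a : ∑ i, sortDesc p i * Real.log (sortDesc p i)
      = ∑ i, p i * Real.log (p i) := by
    rw [← Equiv.sum_comp e (fun k => p k * Real.log (p k))]
    exact Finset.sum_congr rfl fun i _ => by rw [ha]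
  have hqre : qRelEnt ρ σ = (∑ i, p i * Real.log (p i)) - ((ρ * matLog σ).trace).re := by
    rw [qRelEnt, mul_sub, Matrix.trace_sub, Complex.sub_re, hself]
  have hrel1 : relEnt (sortDesc p) (sortDesc q)
      = (∑ i, p i * Real.log (p i)) - ∑ i, sortDesc p i * Real.log (sortDesc q i) := by
    rw [relEnt, ← hsum_a, ← Finset.sum_sub_distrib]
    refine Finset.sum_congr rfl fun i _ => ?_
    ring
  have hrel2 : relEnt (sortDesc p) (sortAsc q)
      = (∑ i, p i * Real.log (p i)) - ∑ i, sortDesc p i * Real.log (sortAsc q i) := by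
    rw [relEnt, ← hsum_a, ← Finset.sum_sub_distrib]
    refine Finset.sum_congr rfl fun i _ => ?_
    ring
  beta_reduce at bounds
  rw [← hcross] at bounds
  constructor
  · rw [hrel1, hqre]
    linarith [bounds.2]
  · rw [hrel2, hqre]
    linarith [bounds.1]
end

section
/- For a two-qubit density matrix ρ_AB with eigenvalues λ₁ ≥ λ₂ ≥ λ₃ ≥ λ₄ ≥ 0, the smallest eigenvalue λ_A of the reduced state ρ_A = Tr_B ρ_AB satisfies λ_A ≥ λ₃ + λ₄. -/
open Matrix ComplexOrder

open scoped ComplexConjugate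

lemma cs2 (a b x y : ℂ) : Complex.normSq (a*x + b*y) ≤
    (Complex.normSq a + Complex.normSq b) * (Complex.normSq x + Complex.normSq y) := by
  have h : (Complex.normSq a + Complex.normSq b) * (Complex.normSq x + Complex.normSq y)
      - Complex.normSq (a*x + b*y) = Complex.normSq ((starRingEnd ℂ) a * y - (starRingEnd ℂ) b * x) := by
    simp only [Complex.normSq_apply, Complex.add_re, Complex.add_im, Complex.mul_re,
      Complex.mul_im, Complex.sub_re, Complex.sub_im, Complex.conj_re, Complex.conj_im]
    ring
  nlinarith [Complex.normSq_nonneg ((starRingEnd ℂ) a * y - (starRingEnd ℂ) b * x)]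

lemma sorted_bound (q d : Fin 4 → ℝ) (h0 : ∀ j, 0 ≤ d j) (h1 : ∀ j, d j ≤ 1)
    (hs : ∑ j, d j = 2) :
    sortDesc q ⟨2, by norm_num⟩ + sortDesc q ⟨3, by norm_num⟩ ≤ ∑ j, q j * d j := by
  set σ := Tuple.sort q with hσ
  have hmono : Monotone (q ∘ σ) := Tuple.monotone_sort q
  have hre : ∑ j, q j * d j = ∑ j, (q ∘ σ) j * (d ∘ σ) j :=
    (Equiv.sum_comp σ (fun j => q j * d j)).symm
  have hds : ∑ j, (d ∘ σ) j = 2 := by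
    rw [show ∑ j, (d ∘ σ) j = ∑ j, d (σ j) from rfl, Equiv.sum_comp σ d]; exact hs
  have e2 : sortDesc q ⟨2, by norm_num⟩ = (q ∘ σ) 1 := rfl
  have e3 : sortDesc q ⟨3, by norm_num⟩ = (q ∘ σ) 0 := rfl
  rw [hre, e2, e3]
  set μ := q ∘ σ
  set w := d ∘ σ with hwdef
  have m01 : μ 0 ≤ μ 1 := hmono (by decide)
  have m12 : μ 1 ≤ μ 2 := hmono (by decide)
  have m13 : μ 1 ≤ μ 3 := hmono (by decide)
  have w0 : 0 ≤ w 0 := h0 _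
  have w1 : 0 ≤ w 1 := h0 _
  have w2 : 0 ≤ w 2 := h0 _
  have w3 : 0 ≤ w 3 := h0 _
  have u0 : w 0 ≤ 1 := h1 _
  rw [Fin.sum_univ_four] at hds ⊢
  have key : μ 1 * (w 0 + w 1 + w 2 + w 3) = μ 1 * 2 := by rw [hds]
  nlinarith [mul_nonneg (sub_nonneg.2 m12) w2, mul_nonneg (sub_nonneg.2 m13) w3,
    mul_nonneg (sub_nonneg.2 m01) (sub_nonneg.2 u0), key]

theorem stmt_8 (ρ : Matrix (Fin 2 × Fin 2) (Fin 2 × Fin 2) ℂ)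
    (hρ : ρ.PosSemidef) (hρ1 : ρ.trace = 1) :
    min (evals (ptraceB ρ) 0) (evals (ptraceB ρ) 1) ≥
      sortDesc (evalsP ρ) ⟨2, by norm_num⟩ + sortDesc (evalsP ρ) ⟨3, by norm_num⟩ := by
  have hH := hρ.1
  have hentry : ∀ a b, conj (ρ b a) = ρ a b := by
    intro a b
    have := congr_fun (congr_fun hH a) b
    simpa [Matrix.conjTranspose_apply] using this
  have hA : (ptraceB ρ).IsHermitian := by
    ext i j
    simp only [Matrix.conjTranspose_apply, ptraceB, star_sum]
    exact Finset.sum_congr rfl fun k _ => hentry (i,k) (j,k)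
  set U : Matrix (Fin 2 × Fin 2) (Fin 2 × Fin 2) ℂ :=
    (hH.eigenvectorUnitary : Matrix (Fin 2 × Fin 2) (Fin 2 × Fin 2) ℂ) with hU
  set Λ : Fin 2 × Fin 2 → ℝ := hH.eigenvalues with hΛ
  have hexp : ∀ p q', ρ p q' = ∑ m, (Λ m : ℂ) * (U p m * conj (U q' m)) := by
    intro p q'
    conv_lhs => rw [hH.spectral_theorem, Unitary.conjStarAlgAut_apply]
    simp only [Matrix.mul_apply, Matrix.diagonal_apply, mul_ite, mul_zero,
      Finset.sum_ite_eq, Finset.sum_ite_eq', Matrix.star_apply]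
    refine Finset.sum_congr rfl fun m _ => ?_
    simp only [Function.comp_apply, Complex.star_def, Finset.mem_univ, if_true]
    rw [mul_right_comm]
    exact mul_comm _ _
  have hUU : ∀ p q, ∑ m, U p m * conj (U q m) = if p = q then 1 else 0 := by
    intro p q
    have h1 : U * star U = 1 := Matrix.mem_unitaryGroup_iff.mp hH.eigenvectorUnitary.2
    have := congr_fun (congr_fun h1 p) q
    simpa [Matrix.mul_apply, Matrix.conjTranspose_apply, Matrix.one_apply] using this
  have hUcol : ∀ m, ∑ p, Complex.normSq (U p m) = 1 := by
    intro m
    have h1 : star U * U = 1 := Matrix.mem_unitaryGroup_iff'.mp hH.eigenvectorUnitary.2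
    have h2 := congr_fun (congr_fun h1 m) m
    simp only [Matrix.mul_apply, Matrix.conjTranspose_apply, Matrix.one_apply_eq,
      Matrix.star_apply] at h2
    have h3 : ∑ p, ((Complex.normSq (U p m) : ℂ)) = 1 := by
      rw [← h2]
      exact Finset.sum_congr rfl fun p _ => by rw [Complex.normSq_eq_conj_mul_self]; rfl
    exact_mod_cast h3
  have hev : evalsP ρ = fun j => Λ (finProdFinEquiv.symm j) := by
    funext j
    show evals ρ _ = _
    unfold evals
    rw [dif_pos hH]
  -- main bound for each index i of the reduced state
  have main : ∀ i : Fin 2,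
      sortDesc (evalsP ρ) ⟨2, by norm_num⟩ + sortDesc (evalsP ρ) ⟨3, by norm_num⟩ ≤
        evals (ptraceB ρ) i := by
    intro i
    have hevi : evals (ptraceB ρ) i = hA.eigenvalues i := by
      unfold evals; rw [dif_pos hA]
    set v : Fin 2 → ℂ := ⇑(hA.eigenvectorBasis i) with hv
    have hmv : ptraceB ρ *ᵥ v = hA.eigenvalues i • v := hA.mulVec_eigenvectorBasis i
    have hvn : ∑ a, conj (v a) * v a = 1 := by
      have h := orthonormal_iff_ite.mp hA.eigenvectorBasis.orthonormal i i
      rw [if_pos rfl] at h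
      rw [EuclideanSpace.inner_eq_star_dotProduct] at h
      simpa [dotProduct, Pi.star_apply, Complex.star_def, hv, mul_comm] using h
    have hvnR : Complex.normSq (v 0) + Complex.normSq (v 1) = 1 := by
      have : ((Complex.normSq (v 0) + Complex.normSq (v 1) : ℝ) : ℂ) = 1 := by
        push_cast
        rw [Complex.normSq_eq_conj_mul_self, Complex.normSq_eq_conj_mul_self]
        rw [Fin.sum_univ_two] at hvn
        exact_mod_cast hvn
      exact_mod_cast this
    set T : (Fin 2 × Fin 2) → Fin 2 → ℂ := fun m k => ∑ a, conj (v a) * U (a, k) m with hT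
    set c : (Fin 2 × Fin 2) → ℝ :=
      fun m => Complex.normSq (T m 0) + Complex.normSq (T m 1) with hcdef
    have hc : ∀ m, ((c m : ℂ)) = T m 0 * conj (T m 0) + T m 1 * conj (T m 1) := by
      intro m
      rw [Complex.mul_conj, Complex.mul_conj]
      exact Complex.ofReal_add _ _
    -- the key spectral identity
    have key : ((hA.eigenvalues i : ℝ) : ℂ) = ∑ m, (Λ m : ℂ) * ((c m : ℂ)) := by
      have h1 : ((hA.eigenvalues i : ℝ) : ℂ) = star v ⬝ᵥ (ptraceB ρ *ᵥ v) := by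
        rw [hmv, dotProduct_smul]
        have : star v ⬝ᵥ v = 1 := by
          simpa [dotProduct, Pi.star_apply, Complex.star_def] using hvn
        rw [this]
        simp [Complex.real_smul]
      rw [h1]
      simp only [dotProduct, Matrix.mulVec, ptraceB, hc, hT]
      simp only [hexp]
      simp only [Fintype.sum_prod_type, Fin.sum_univ_two, Pi.star_apply, Complex.star_def]
      simp only [map_add, _root_.map_mul, map_sum, Complex.conj_conj, Complex.conj_ofReal]
      ring
    have keyR : hA.eigenvalues i = ∑ m, Λ m * c m := by
      have : ((hA.eigenvalues i : ℝ) : ℂ) = ((∑ m, Λ m * c m : ℝ) : ℂ) := by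
        rw [key]; push_cast; rfl
      exact_mod_cast this
    -- bounds on the weights c
    have c0 : ∀ m, 0 ≤ c m := fun m =>
      add_nonneg (Complex.normSq_nonneg _) (Complex.normSq_nonneg _)
    have c1 : ∀ m, c m ≤ 1 := by
      intro m
      have hT0 : T m 0 = conj (v 0) * U (0, 0) m + conj (v 1) * U (1, 0) m := by
        simp only [hT]; rw [Fin.sum_univ_two]
      have hT1 : T m 1 = conj (v 0) * U (0, 1) m + conj (v 1) * U (1, 1) m := by
        simp only [hT]; rw [Fin.sum_univ_two]
      have h0 := cs2 (conj (v 0)) (conj (v 1)) (U (0, 0) m) (U (1, 0) m)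
      have h1 := cs2 (conj (v 0)) (conj (v 1)) (U (0, 1) m) (U (1, 1) m)
      rw [Complex.normSq_conj, Complex.normSq_conj, hvnR, one_mul] at h0 h1
      have hcol := hUcol m
      rw [Fintype.sum_prod_type, Fin.sum_univ_two, Fin.sum_univ_two, Fin.sum_univ_two] at hcol
      rw [hcdef]
      simp only [hT0, hT1]
      linarith
    have csum : ∑ m, c m = 2 := by
      have hcc : ∑ m, ((c m : ℂ)) = 2 := by
        simp only [hc, hT]
        have ediag : ∀ a k : Fin 2, ∑ m, U (a,k) m * conj (U (a,k) m) = 1 := by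
          intro a k; rw [hUU]; simp
        have ecross : ∀ a b k : Fin 2, a ≠ b →
            ∑ m, U (a,k) m * conj (U (b,k) m) = 0 := by
          intro a b k hab; rw [hUU]; simp [Prod.ext_iff, hab]
        have e00 := ediag 0 0
        have e10 := ediag 1 0
        have e01 := ediag 0 1
        have e11 := ediag 1 1
        have x010 := ecross 0 1 0 (by decide)
        have x100 := ecross 1 0 0 (by decide)
        have x011 := ecross 0 1 1 (by decide)
        have x101 := ecross 1 0 1 (by decide)
        rw [Fin.sum_univ_two] at hvn
        simp only [Fintype.sum_prod_type, Fin.sum_univ_two] at e00 e10 e01 e11 x010 x100 x011 x101 ⊢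
        simp only [map_add, _root_.map_mul, map_sum, Complex.conj_conj]
        linear_combination (conj (v 0) * v 0) * e00 + (conj (v 1) * v 1) * e10 +
          (conj (v 0) * v 0) * e01 + (conj (v 1) * v 1) * e11 +
          (conj (v 0) * v 1) * x010 + (conj (v 1) * v 0) * x100 +
          (conj (v 0) * v 1) * x011 + (conj (v 1) * v 0) * x101 + 2 * hvn
      have h4 : ((∑ m, c m : ℝ) : ℂ) = 2 := by push_cast; exact hcc
      exact_mod_cast h4
    -- transfer to Fin 4 and conclude via sorted_bound
    set d : Fin 4 → ℝ := fun j => c (finProdFinEquiv.symm j) with hd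
    have hsum4 : ∑ j, (evalsP ρ) j * d j = ∑ m, Λ m * c m := by
      have h := Equiv.sum_comp (finProdFinEquiv.symm : Fin (2*2) ≃ Fin 2 × Fin 2)
        (fun m => Λ m * c m)
      rw [hev]
      exact h
    have hds : ∑ j, d j = 2 := by
      have h := Equiv.sum_comp (finProdFinEquiv.symm : Fin (2*2) ≃ Fin 2 × Fin 2) c
      exact h.trans csum
    have := sorted_bound (evalsP ρ) d (fun j => c0 _) (fun j => c1 _) hds
    rw [hsum4] at this
    rw [hevi, keyR]
    exact this
  rw [ge_iff_le, le_min_iff]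
  exact ⟨main 0, main 1⟩
end

section
/- For a two-qubit density matrix ρ_AB with ordered eigenvalues λ₁ ≥ λ₂ ≥ λ₃ ≥ λ₄ and reduced states with minimal eigenvalues λ_A, λ_B, one has |λ_A − λ_B| ≤ min(λ₁ − λ₃, λ₂ − λ₄). -/
open Matrix ComplexOrder

/-! For unit vectors `φ, ψ ∈ ℂ²` with orthogonal complements `φ⊥, ψ⊥`, expanding both partial
traces in product bases gives
`⟨φ|ρ_A|φ⟩ - ⟨ψ|ρ_B|ψ⟩ = ⟨φ⊗ψ⊥|ρ|φ⊗ψ⊥⟩ - ⟨φ⊥⊗ψ|ρ|φ⊥⊗ψ⟩`.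
If `ψ` is a minimal eigenvector of `ρ_B`, the left side bounds `λ_A - λ_B` from above for every
unit `φ`. One linear condition on `φ` makes `φ⊗ψ⊥` orthogonal to the top eigenvector of `ρ`, and
the Rayleigh–Ritz bounds give `λ_A - λ_B ≤ λ₂ - λ₄`; making `φ⊥⊗ψ` orthogonal to the bottom
eigenvector instead gives `λ_A - λ_B ≤ λ₁ - λ₃`. Exchanging the factors bounds `λ_B - λ_A`. -/

open scoped InnerProductSpace

lemma OrthonormalBasis.re_star_dotProduct_self_eq_sum {𝕜 : Type*} [RCLike 𝕜] {n : Type*}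
    [Fintype n] (b : OrthonormalBasis n 𝕜 (EuclideanSpace 𝕜 n)) (x : n → 𝕜) :
    RCLike.re (star x ⬝ᵥ x) = ∑ i, ‖star ⇑(b i) ⬝ᵥ x‖ ^ 2 := by
  have h := b.sum_sq_norm_inner_right (WithLp.toLp 2 x)
  rw [@norm_sq_eq_re_inner 𝕜, EuclideanSpace.inner_toLp_toLp] at h
  simpa only [EuclideanSpace.inner_eq_star_dotProduct, dotProduct_comm x] using h.symm

lemma exists_normalized_dotProduct_eq_zero {𝕜 n : Type*} [RCLike 𝕜] [Fintype n]
    (hn : 1 < Fintype.card n) (c : n → 𝕜) :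
    ∃ φ : n → 𝕜, star φ ⬝ᵥ φ = 1 ∧ c ⬝ᵥ φ = 0 := by
  have hker : LinearMap.ker (innerₛₗ 𝕜 (WithLp.toLp 2 (star c))) ≠ ⊥ :=
    LinearMap.ker_ne_bot_of_finrank_lt <| by simpa [finrank_euclideanSpace] using hn
  obtain ⟨v, hv, hv0⟩ := Submodule.ne_bot_iff _ |>.mp hker
  set u : EuclideanSpace 𝕜 n := (‖v‖⁻¹ : 𝕜) • v
  have hu : ‖u‖ = 1 := norm_smul_inv_norm hv0
  have hcu : ⟪WithLp.toLp 2 (star c), u⟫_𝕜 = 0 := by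
    rw [inner_smul_right, ← innerₛₗ_apply_apply, LinearMap.mem_ker.mp hv, mul_zero]
  refine ⟨u, ?_, ?_⟩
  · rw [dotProduct_comm, ← EuclideanSpace.inner_eq_star_dotProduct, inner_self_eq_norm_sq_to_K,
      hu, RCLike.ofReal_one, one_pow]
  · rwa [EuclideanSpace.inner_eq_star_dotProduct, WithLp.ofLp_toLp, star_star,
      dotProduct_comm] at hcu

namespace Matrix.IsHermitian

variable {𝕜 : Type*} [RCLike 𝕜] {n : Type*} [Fintype n] [DecidableEq n] {A : Matrix n n 𝕜}

lemma star_eigenvectorBasis_dotProduct_mulVec (hA : A.IsHermitian) (i : n) (x : n → 𝕜) :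
    star ⇑(hA.eigenvectorBasis i) ⬝ᵥ A *ᵥ x =
      hA.eigenvalues i * (star ⇑(hA.eigenvectorBasis i) ⬝ᵥ x) := by
  have h : star ⇑(hA.eigenvectorBasis i) ᵥ* A = star (A *ᵥ ⇑(hA.eigenvectorBasis i)) := by
    rw [star_mulVec, hA.eq]
  rw [dotProduct_mulVec, h, mulVec_eigenvectorBasis, star_smul, star_trivial, smul_dotProduct,
    RCLike.real_smul_eq_coe_mul]

lemma re_star_dotProduct_mulVec_eq_sum (hA : A.IsHermitian) (x : n → 𝕜) :
    RCLike.re (star x ⬝ᵥ A *ᵥ x) =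
      ∑ i, hA.eigenvalues i * ‖star ⇑(hA.eigenvectorBasis i) ⬝ᵥ x‖ ^ 2 := by
  have h := hA.eigenvectorBasis.sum_inner_mul_inner (WithLp.toLp 2 x) (WithLp.toLp 2 (A *ᵥ x))
  simp only [EuclideanSpace.inner_eq_star_dotProduct, dotProduct_comm _ (star _),
    star_eigenvectorBasis_dotProduct_mulVec] at h
  rw [← h, map_sum]
  refine Finset.sum_congr rfl fun i _ => ?_
  have hc : star x ⬝ᵥ ⇑(hA.eigenvectorBasis i) = star (star ⇑(hA.eigenvectorBasis i) ⬝ᵥ x) := by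
    rw [star_dotProduct]
  rw [mul_left_comm, RCLike.re_ofReal_mul, hc, RCLike.star_def, RCLike.conj_mul,
    ← RCLike.ofReal_pow, RCLike.ofReal_re]

lemma re_star_dotProduct_mulVec_le (hA : A.IsHermitian) {c : ℝ} {x : n → 𝕜}
    (hx : star x ⬝ᵥ x = 1)
    (hc : ∀ i, star ⇑(hA.eigenvectorBasis i) ⬝ᵥ x ≠ 0 → hA.eigenvalues i ≤ c) :
    RCLike.re (star x ⬝ᵥ A *ᵥ x) ≤ c := by
  rw [hA.re_star_dotProduct_mulVec_eq_sum]
  calc ∑ i, hA.eigenvalues i * ‖star ⇑(hA.eigenvectorBasis i) ⬝ᵥ x‖ ^ 2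
      ≤ ∑ i, c * ‖star ⇑(hA.eigenvectorBasis i) ⬝ᵥ x‖ ^ 2 := by
        refine Finset.sum_le_sum fun i _ => ?_
        by_cases h0 : star ⇑(hA.eigenvectorBasis i) ⬝ᵥ x = 0
        · simp [h0]
        · exact mul_le_mul_of_nonneg_right (hc i h0) (sq_nonneg _)
    _ = c := by
        rw [← Finset.mul_sum, ← hA.eigenvectorBasis.re_star_dotProduct_self_eq_sum, hx,
          RCLike.one_re, mul_one]

lemma le_re_star_dotProduct_mulVec (hA : A.IsHermitian) {c : ℝ} {x : n → 𝕜}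
    (hx : star x ⬝ᵥ x = 1)
    (hc : ∀ i, star ⇑(hA.eigenvectorBasis i) ⬝ᵥ x ≠ 0 → c ≤ hA.eigenvalues i) :
    c ≤ RCLike.re (star x ⬝ᵥ A *ᵥ x) := by
  rw [hA.re_star_dotProduct_mulVec_eq_sum]
  calc c = ∑ i, c * ‖star ⇑(hA.eigenvectorBasis i) ⬝ᵥ x‖ ^ 2 := by
        rw [← Finset.mul_sum, ← hA.eigenvectorBasis.re_star_dotProduct_self_eq_sum, hx,
          RCLike.one_re, mul_one]
    _ ≤ ∑ i, hA.eigenvalues i * ‖star ⇑(hA.eigenvectorBasis i) ⬝ᵥ x‖ ^ 2 := by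
        refine Finset.sum_le_sum fun i _ => ?_
        by_cases h0 : star ⇑(hA.eigenvectorBasis i) ⬝ᵥ x = 0
        · simp [h0]
        · exact mul_le_mul_of_nonneg_right (hc i h0) (sq_nonneg _)

variable {d : ℕ} {τ : Fin d ≃ n}

lemma re_star_dotProduct_mulVec_le_of_orthogonal (hA : A.IsHermitian)
    (hτ : Antitone (hA.eigenvalues ∘ τ)) (k : Fin d) {x : n → 𝕜} (hx : star x ⬝ᵥ x = 1)
    (horth : ∀ i < k, star ⇑(hA.eigenvectorBasis (τ i)) ⬝ᵥ x = 0) :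
    RCLike.re (star x ⬝ᵥ A *ᵥ x) ≤ hA.eigenvalues (τ k) :=
  hA.re_star_dotProduct_mulVec_le hx fun i hi => by
    obtain ⟨j, rfl⟩ := τ.surjective i
    exact hτ (not_lt.mp fun hjk => hi (horth j hjk))

lemma le_re_star_dotProduct_mulVec_of_orthogonal (hA : A.IsHermitian)
    (hτ : Antitone (hA.eigenvalues ∘ τ)) (k : Fin d) {x : n → 𝕜} (hx : star x ⬝ᵥ x = 1)
    (horth : ∀ i, k < i → star ⇑(hA.eigenvectorBasis (τ i)) ⬝ᵥ x = 0) :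
    hA.eigenvalues (τ k) ≤ RCLike.re (star x ⬝ᵥ A *ᵥ x) :=
  hA.le_re_star_dotProduct_mulVec hx fun i hi => by
    obtain ⟨j, rfl⟩ := τ.surjective i
    exact hτ (not_lt.mp fun hkj => hi (horth j hkj))

end Matrix.IsHermitian

def vecTensor {R m n : Type*} [Mul R] (φ : m → R) (ψ : n → R) : m × n → R :=
  fun p => φ p.1 * ψ p.2

/-- For a unit vector `φ`, `(φ, perp φ)` is an orthonormal basis of `𝕜²`. -/
def perp {R : Type*} [Neg R] [Star R] (φ : Fin 2 → R) : Fin 2 → R :=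
  ![-star (φ 1), star (φ 0)]

section Tensor

variable {R : Type*} {m n : Type*}

lemma vecTensor_neg_left [Mul R] [HasDistribNeg R] (φ : m → R) (ψ : n → R) :
    vecTensor (-φ) ψ = -vecTensor φ ψ := by
  ext; simp [vecTensor]

lemma vecTensor_neg_right [Mul R] [HasDistribNeg R] (φ : m → R) (ψ : n → R) :
    vecTensor φ (-ψ) = -vecTensor φ ψ := by
  ext; simp [vecTensor]

variable [CommRing R] [StarRing R]

lemma star_vecTensor_dotProduct_vecTensor [Fintype m] [Fintype n]
    (φ φ' : m → R) (ψ ψ' : n → R) :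
    star (vecTensor φ ψ) ⬝ᵥ vecTensor φ' ψ' = (star φ ⬝ᵥ φ') * (star ψ ⬝ᵥ ψ') := by
  simp only [dotProduct, vecTensor, Fintype.sum_prod_type, Pi.star_apply, star_mul',
    Finset.sum_mul_sum]
  exact Finset.sum_congr rfl fun i _ => Finset.sum_congr rfl fun j _ => by ring

lemma star_vecTensor_dotProduct_self_eq_one [Fintype m] [Fintype n] {φ : m → R} {ψ : n → R}
    (hφ : star φ ⬝ᵥ φ = 1) (hψ : star ψ ⬝ᵥ ψ = 1) :
    star (vecTensor φ ψ) ⬝ᵥ vecTensor φ ψ = 1 := by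
  rw [star_vecTensor_dotProduct_vecTensor, hφ, hψ, one_mul]

lemma star_perp_dotProduct_perp (φ : Fin 2 → R) : star (perp φ) ⬝ᵥ perp φ = star φ ⬝ᵥ φ := by
  simp only [dotProduct, perp, Fin.sum_univ_two, Pi.star_apply, Matrix.cons_val_zero,
    Matrix.cons_val_one, Matrix.cons_val_fin_one, star_neg, star_star]
  ring

lemma perp_perp (φ : Fin 2 → R) : perp (perp φ) = -φ := by
  ext i
  fin_cases i <;> simp [perp]

end Tensor

section OrthogonalTensor

variable {𝕜 : Type*} [RCLike 𝕜] {m n : Type*} [Fintype m] [Fintype n]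

lemma exists_normalized_orthogonal_vecTensor_left (hm : 1 < Fintype.card m)
    (w : m × n → 𝕜) (χ : n → 𝕜) :
    ∃ φ : m → 𝕜, star φ ⬝ᵥ φ = 1 ∧ star w ⬝ᵥ vecTensor φ χ = 0 := by
  obtain ⟨φ, hφ, h0⟩ := exists_normalized_dotProduct_eq_zero hm
    fun i => ∑ k, star (w (i, k)) * χ k
  refine ⟨φ, hφ, h0 ▸ ?_⟩
  simp only [dotProduct, vecTensor, Fintype.sum_prod_type, Pi.star_apply, Finset.sum_mul]
  exact Finset.sum_congr rfl fun i _ => Finset.sum_congr rfl fun k _ => by ring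

lemma exists_normalized_orthogonal_vecTensor_right (hn : 1 < Fintype.card n)
    (w : m × n → 𝕜) (χ : m → 𝕜) :
    ∃ ψ : n → 𝕜, star ψ ⬝ᵥ ψ = 1 ∧ star w ⬝ᵥ vecTensor χ ψ = 0 := by
  obtain ⟨ψ, hψ, h0⟩ := exists_normalized_dotProduct_eq_zero hn
    fun k => ∑ i, star (w (i, k)) * χ i
  refine ⟨ψ, hψ, h0 ▸ ?_⟩
  simp only [dotProduct, vecTensor, Fintype.sum_prod_type, Pi.star_apply, Finset.sum_mul]
  rw [Finset.sum_comm]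
  exact Finset.sum_congr rfl fun k _ => Finset.sum_congr rfl fun i _ => by ring

lemma exists_normalized_orthogonal_vecTensor_perp_left (w : Fin 2 × n → 𝕜) (χ : n → 𝕜) :
    ∃ φ : Fin 2 → 𝕜, star φ ⬝ᵥ φ = 1 ∧ star w ⬝ᵥ vecTensor (perp φ) χ = 0 := by
  obtain ⟨φ, hφ, h0⟩ := exists_normalized_orthogonal_vecTensor_left (by simp) w χ
  refine ⟨perp φ, (star_perp_dotProduct_perp φ).trans hφ, ?_⟩
  rw [perp_perp, vecTensor_neg_left, dotProduct_neg, h0, neg_zero]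

lemma exists_normalized_orthogonal_vecTensor_perp_right (w : m × Fin 2 → 𝕜) (χ : m → 𝕜) :
    ∃ ψ : Fin 2 → 𝕜, star ψ ⬝ᵥ ψ = 1 ∧ star w ⬝ᵥ vecTensor χ (perp ψ) = 0 := by
  obtain ⟨ψ, hψ, h0⟩ := exists_normalized_orthogonal_vecTensor_right (by simp) w χ
  refine ⟨perp ψ, (star_perp_dotProduct_perp ψ).trans hψ, ?_⟩
  rw [perp_perp, vecTensor_neg_right, dotProduct_neg, h0, neg_zero]

end OrthogonalTensor

section PartialTrace

variable {a b : ℕ}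

lemma isHermitian_ptraceB {ρ : Matrix (Fin a × Fin b) (Fin a × Fin b) ℂ}
    (hρ : ρ.IsHermitian) : (ptraceB ρ).IsHermitian := by
  ext i j
  simp only [conjTranspose_apply, ptraceB, star_sum]
  exact Finset.sum_congr rfl fun k _ => hρ.apply _ _

lemma isHermitian_ptraceA {ρ : Matrix (Fin a × Fin b) (Fin a × Fin b) ℂ}
    (hρ : ρ.IsHermitian) : (ptraceA ρ).IsHermitian := by
  ext i j
  simp only [conjTranspose_apply, ptraceA, star_sum]
  exact Finset.sum_congr rfl fun k _ => hρ.apply _ _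

lemma star_dotProduct_ptraceB_mulVec_mul (ρ : Matrix (Fin a × Fin 2) (Fin a × Fin 2) ℂ)
    (φ : Fin a → ℂ) (ψ : Fin 2 → ℂ) :
    (star φ ⬝ᵥ ptraceB ρ *ᵥ φ) * (star ψ ⬝ᵥ ψ) =
      star (vecTensor φ ψ) ⬝ᵥ ρ *ᵥ vecTensor φ ψ +
        star (vecTensor φ (perp ψ)) ⬝ᵥ ρ *ᵥ vecTensor φ (perp ψ) := by
  simp only [dotProduct, mulVec, ptraceB, vecTensor, perp, Fintype.sum_prod_type,
    Fin.sum_univ_two, Pi.star_apply, star_mul', star_neg, star_star,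
    Matrix.cons_val_zero, Matrix.cons_val_one, Matrix.cons_val_fin_one,
    Finset.mul_sum, Finset.sum_mul, ← Finset.sum_add_distrib]
  refine Finset.sum_congr rfl fun i _ => Finset.sum_congr rfl fun j _ => ?_
  ring

lemma star_dotProduct_ptraceA_mulVec_mul (ρ : Matrix (Fin 2 × Fin b) (Fin 2 × Fin b) ℂ)
    (φ : Fin 2 → ℂ) (ψ : Fin b → ℂ) :
    (star ψ ⬝ᵥ ptraceA ρ *ᵥ ψ) * (star φ ⬝ᵥ φ) =
      star (vecTensor φ ψ) ⬝ᵥ ρ *ᵥ vecTensor φ ψ +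
        star (vecTensor (perp φ) ψ) ⬝ᵥ ρ *ᵥ vecTensor (perp φ) ψ := by
  simp only [dotProduct, mulVec, ptraceA, vecTensor, perp, Fintype.sum_prod_type,
    Fin.sum_univ_two, Pi.star_apply, star_mul', star_neg, star_star,
    Matrix.cons_val_zero, Matrix.cons_val_one, Matrix.cons_val_fin_one,
    Finset.mul_sum, Finset.sum_mul, ← Finset.sum_add_distrib]
  refine Finset.sum_congr rfl fun i _ => Finset.sum_congr rfl fun j _ => ?_
  ring

lemma re_star_dotProduct_ptraceB_mulVec_sub_ptraceA
    (ρ : Matrix (Fin 2 × Fin 2) (Fin 2 × Fin 2) ℂ)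
    {φ ψ : Fin 2 → ℂ} (hφ : star φ ⬝ᵥ φ = 1) (hψ : star ψ ⬝ᵥ ψ = 1) :
    (star φ ⬝ᵥ ptraceB ρ *ᵥ φ).re - (star ψ ⬝ᵥ ptraceA ρ *ᵥ ψ).re =
      (star (vecTensor φ (perp ψ)) ⬝ᵥ ρ *ᵥ vecTensor φ (perp ψ)).re -
        (star (vecTensor (perp φ) ψ) ⬝ᵥ ρ *ᵥ vecTensor (perp φ) ψ).re := by
  have hB := star_dotProduct_ptraceB_mulVec_mul ρ φ ψ
  have hA := star_dotProduct_ptraceA_mulVec_mul ρ φ ψ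
  rw [hψ, mul_one] at hB
  rw [hφ, mul_one] at hA
  rw [hA, hB, Complex.add_re, Complex.add_re]
  ring

end PartialTrace

lemma evals_of_isHermitian {n : Type*} [Fintype n] [DecidableEq n] {A : Matrix n n ℂ}
    (hA : A.IsHermitian) : evals A = hA.eigenvalues :=
  dif_pos hA

section TwoByTwo

variable {M : Matrix (Fin 2) (Fin 2) ℂ}

lemma min_evals_le_re_star_dotProduct_mulVec (hM : M.IsHermitian) {φ : Fin 2 → ℂ}
    (hφ : star φ ⬝ᵥ φ = 1) : min (evals M 0) (evals M 1) ≤ (star φ ⬝ᵥ M *ᵥ φ).re := by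
  refine hM.le_re_star_dotProduct_mulVec hφ fun i _ => ?_
  rw [evals_of_isHermitian hM]
  fin_cases i
  exacts [min_le_left _ _, min_le_right _ _]

lemma exists_re_star_dotProduct_mulVec_eq_min_evals (hM : M.IsHermitian) :
    ∃ φ : Fin 2 → ℂ, star φ ⬝ᵥ φ = 1 ∧ (star φ ⬝ᵥ M *ᵥ φ).re = min (evals M 0) (evals M 1) := by
  have hunit : ∀ i, star ⇑(hM.eigenvectorBasis i) ⬝ᵥ ⇑(hM.eigenvectorBasis i) = 1 := fun i => by
    rw [dotProduct_comm, ← EuclideanSpace.inner_eq_star_dotProduct,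
      hM.eigenvectorBasis.inner_eq_one]
  rw [evals_of_isHermitian hM]
  rcases le_total (hM.eigenvalues 0) (hM.eigenvalues 1) with h | h
  · exact ⟨_, hunit 0, by rw [min_eq_left h, hM.eigenvalues_eq]; rfl⟩
  · exact ⟨_, hunit 1, by rw [min_eq_right h, hM.eigenvalues_eq]; rfl⟩

end TwoByTwo

lemma sortDesc_antitone {d : ℕ} (p : Fin d → ℝ) : Antitone (sortDesc p) :=
  (Tuple.monotone_sort p).comp_antitone Fin.rev_anti

lemma exists_equiv_sortDesc_evalsP {a b : ℕ} {ρ : Matrix (Fin a × Fin b) (Fin a × Fin b) ℂ}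
    (hρ : ρ.IsHermitian) :
    ∃ τ : Fin (a * b) ≃ Fin a × Fin b, sortDesc (evalsP ρ) = hρ.eigenvalues ∘ τ :=
  ⟨(Fin.revPerm.trans (Tuple.sort (evalsP ρ))).trans finProdFinEquiv.symm, by
    ext k; simp [sortDesc, evalsP, evals_of_isHermitian hρ]⟩

section TwoQubit

variable {ρ : Matrix (Fin 2 × Fin 2) (Fin 2 × Fin 2) ℂ}

lemma min_evals_ptraceB_sub_min_evals_ptraceA_le (hρ : ρ.IsHermitian) {u l : ℝ}
    (h : ∀ ψ : Fin 2 → ℂ, star ψ ⬝ᵥ ψ = 1 → ∃ φ : Fin 2 → ℂ, star φ ⬝ᵥ φ = 1 ∧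
      (star (vecTensor φ (perp ψ)) ⬝ᵥ ρ *ᵥ vecTensor φ (perp ψ)).re ≤ u ∧
      l ≤ (star (vecTensor (perp φ) ψ) ⬝ᵥ ρ *ᵥ vecTensor (perp φ) ψ).re) :
    min (evals (ptraceB ρ) 0) (evals (ptraceB ρ) 1) -
      min (evals (ptraceA ρ) 0) (evals (ptraceA ρ) 1) ≤ u - l := by
  obtain ⟨ψ, hψ, hψmin⟩ := exists_re_star_dotProduct_mulVec_eq_min_evals (isHermitian_ptraceA hρ)
  obtain ⟨φ, hφ, hu, hl⟩ := h ψ hψ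
  have hφmin := min_evals_le_re_star_dotProduct_mulVec (isHermitian_ptraceB hρ) hφ
  have := re_star_dotProduct_ptraceB_mulVec_sub_ptraceA ρ hφ hψ
  linarith

lemma min_evals_ptraceA_sub_min_evals_ptraceB_le (hρ : ρ.IsHermitian) {u l : ℝ}
    (h : ∀ φ : Fin 2 → ℂ, star φ ⬝ᵥ φ = 1 → ∃ ψ : Fin 2 → ℂ, star ψ ⬝ᵥ ψ = 1 ∧
      (star (vecTensor (perp φ) ψ) ⬝ᵥ ρ *ᵥ vecTensor (perp φ) ψ).re ≤ u ∧
      l ≤ (star (vecTensor φ (perp ψ)) ⬝ᵥ ρ *ᵥ vecTensor φ (perp ψ)).re) :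
    min (evals (ptraceA ρ) 0) (evals (ptraceA ρ) 1) -
      min (evals (ptraceB ρ) 0) (evals (ptraceB ρ) 1) ≤ u - l := by
  obtain ⟨φ, hφ, hφmin⟩ := exists_re_star_dotProduct_mulVec_eq_min_evals (isHermitian_ptraceB hρ)
  obtain ⟨ψ, hψ, hu, hl⟩ := h φ hφ
  have hψmin := min_evals_le_re_star_dotProduct_mulVec (isHermitian_ptraceA hρ) hψ
  have := re_star_dotProduct_ptraceB_mulVec_sub_ptraceA ρ hφ hψ
  linarith

variable {τ : Fin 4 ≃ Fin 2 × Fin 2}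

lemma abs_min_evals_ptraceB_sub_min_evals_ptraceA_le_first_sub_third (hρ : ρ.IsHermitian)
    (hτ : Antitone (hρ.eigenvalues ∘ τ)) :
    |min (evals (ptraceB ρ) 0) (evals (ptraceB ρ) 1) -
      min (evals (ptraceA ρ) 0) (evals (ptraceA ρ) 1)| ≤
      hρ.eigenvalues (τ 0) - hρ.eigenvalues (τ 2) := by
  have le_first {x} (hx : star x ⬝ᵥ x = 1) :=
    hρ.re_star_dotProduct_mulVec_le_of_orthogonal hτ 0 hx fun i hi => absurd hi i.not_lt_zero
  have third_le {x} (hx : star x ⬝ᵥ x = 1) (h3 : star ⇑(hρ.eigenvectorBasis (τ 3)) ⬝ᵥ x = 0) :=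
    hρ.le_re_star_dotProduct_mulVec_of_orthogonal hτ 2 hx fun i hi => by
      obtain rfl : i = 3 := by omega
      exact h3
  have hperp {φ : Fin 2 → ℂ} (hφ : star φ ⬝ᵥ φ = 1) := (star_perp_dotProduct_perp φ).trans hφ
  refine abs_sub_le_iff.mpr ⟨?_, ?_⟩
  · refine min_evals_ptraceB_sub_min_evals_ptraceA_le hρ fun ψ hψ => ?_
    obtain ⟨φ, hφ, h3⟩ := exists_normalized_orthogonal_vecTensor_perp_left _ ψ
    exact ⟨φ, hφ, le_first (star_vecTensor_dotProduct_self_eq_one hφ (hperp hψ)),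
      third_le (star_vecTensor_dotProduct_self_eq_one (hperp hφ) hψ) h3⟩
  · refine min_evals_ptraceA_sub_min_evals_ptraceB_le hρ fun φ hφ => ?_
    obtain ⟨ψ, hψ, h3⟩ := exists_normalized_orthogonal_vecTensor_perp_right _ φ
    exact ⟨ψ, hψ, le_first (star_vecTensor_dotProduct_self_eq_one (hperp hφ) hψ),
      third_le (star_vecTensor_dotProduct_self_eq_one hφ (hperp hψ)) h3⟩

lemma abs_min_evals_ptraceB_sub_min_evals_ptraceA_le_second_sub_fourth (hρ : ρ.IsHermitian)
    (hτ : Antitone (hρ.eigenvalues ∘ τ)) :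
    |min (evals (ptraceB ρ) 0) (evals (ptraceB ρ) 1) -
      min (evals (ptraceA ρ) 0) (evals (ptraceA ρ) 1)| ≤
      hρ.eigenvalues (τ 1) - hρ.eigenvalues (τ 3) := by
  have le_second {x} (hx : star x ⬝ᵥ x = 1) (h0 : star ⇑(hρ.eigenvectorBasis (τ 0)) ⬝ᵥ x = 0) :=
    hρ.re_star_dotProduct_mulVec_le_of_orthogonal hτ 1 hx fun i hi => by
      obtain rfl : i = 0 := by omega
      exact h0
  have fourth_le {x} (hx : star x ⬝ᵥ x = 1) :=
    hρ.le_re_star_dotProduct_mulVec_of_orthogonal hτ 3 hx fun i hi =>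
      absurd hi (Fin.le_last i).not_gt
  have hperp {φ : Fin 2 → ℂ} (hφ : star φ ⬝ᵥ φ = 1) := (star_perp_dotProduct_perp φ).trans hφ
  refine abs_sub_le_iff.mpr ⟨?_, ?_⟩
  · refine min_evals_ptraceB_sub_min_evals_ptraceA_le hρ fun ψ hψ => ?_
    obtain ⟨φ, hφ, h0⟩ := exists_normalized_orthogonal_vecTensor_left (by simp)
      ⇑(hρ.eigenvectorBasis (τ 0)) (perp ψ)
    exact ⟨φ, hφ, le_second (star_vecTensor_dotProduct_self_eq_one hφ (hperp hψ)) h0,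
      fourth_le (star_vecTensor_dotProduct_self_eq_one (hperp hφ) hψ)⟩
  · refine min_evals_ptraceA_sub_min_evals_ptraceB_le hρ fun φ hφ => ?_
    obtain ⟨ψ, hψ, h0⟩ := exists_normalized_orthogonal_vecTensor_right (by simp)
      ⇑(hρ.eigenvectorBasis (τ 0)) (perp φ)
    exact ⟨ψ, hψ, le_second (star_vecTensor_dotProduct_self_eq_one (hperp hφ) hψ) h0,
      fourth_le (star_vecTensor_dotProduct_self_eq_one hφ (hperp hψ))⟩

end TwoQubit

theorem stmt_10 (ρ : Matrix (Fin 2 × Fin 2) (Fin 2 × Fin 2) ℂ)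
    (hρ : ρ.PosSemidef) :
    |min (evals (ptraceB ρ) 0) (evals (ptraceB ρ) 1) -
      min (evals (ptraceA ρ) 0) (evals (ptraceA ρ) 1)| ≤
      min (sortDesc (evalsP ρ) ⟨0, by norm_num⟩ - sortDesc (evalsP ρ) ⟨2, by norm_num⟩)
        (sortDesc (evalsP ρ) ⟨1, by norm_num⟩ - sortDesc (evalsP ρ) ⟨3, by norm_num⟩) := by
  obtain ⟨τ, hτ⟩ := exists_equiv_sortDesc_evalsP hρ.isHermitian
  have hanti : Antitone (hρ.isHermitian.eigenvalues ∘ τ) := hτ ▸ sortDesc_antitone _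
  rw [hτ]
  exact le_min
    (abs_min_evals_ptraceB_sub_min_evals_ptraceA_le_first_sub_third hρ.isHermitian hanti)
    (abs_min_evals_ptraceB_sub_min_evals_ptraceA_le_second_sub_fourth hρ.isHermitian hanti)
end

section
/- The superadditivity inequality of relative entropy fails: there exist two-qubit density matrices ρ_AB and σ_AB, with σ_AB positive definite, such that S(ρ_AB‖σ_AB) < S(ρ_A‖σ_A) + S(ρ_B‖σ_B), where subscripts A, B denote partial traces. -/
open Matrix ComplexOrder

/-! Both witnesses are diagonal in the product basis, so every relative entropy involved is a
classical one. For `ρ = |00⟩⟨00|` and `σ = diag(3/8, 1/8, 1/8, 3/8)` this gives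
`S(ρ‖σ) = log (8/3)`, while `ρ_A`, `ρ_B` are pure and `σ_A = σ_B = 1/2`, so each marginal term is
`log 2`; superadditivity would need `8/3 ≥ 4`. -/

namespace Matrix

variable {n : Type*} [Fintype n] [DecidableEq n]

lemma diagonal_map_mul_eq_mul_diagonal_map {U : Matrix n n ℂ} {d e : n → ℝ}
    (h : diagonal (fun i => (d i : ℂ)) * U = U * diagonal (fun j => (e j : ℂ))) (f : ℝ → ℝ) :
    diagonal (fun i => (f (d i) : ℂ)) * U = U * diagonal (fun j => (f (e j) : ℂ)) := by
  ext i j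
  have hij : (d i : ℂ) * U i j = U i j * e j := by simpa using congr_fun₂ h i j
  simp only [diagonal_mul, mul_diagonal]
  by_cases hU : U i j = 0
  · simp [hU]
  · have : d i = e j := by exact_mod_cast mul_right_cancel₀ hU (hij.trans (mul_comm _ _))
    rw [this, mul_comm]

end Matrix

open Matrix

lemma matLog_diagonal {n : Type*} [Fintype n] [DecidableEq n] (d : n → ℝ) :
    matLog (diagonal (fun i => (d i : ℂ))) = diagonal (fun i => (Real.log (d i) : ℂ)) := by
  have hA : (diagonal (fun i => (d i : ℂ))).IsHermitian :=
    isHermitian_diagonal_of_self_adjoint _ (funext fun i => Complex.conj_ofReal _)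
  set U : Matrix n n ℂ := (hA.eigenvectorUnitary : Matrix n n ℂ)
  have hUU : U * star U = 1 := Unitary.mul_star_self_of_mem hA.eigenvectorUnitary.2
  have hAU : diagonal (fun i => (d i : ℂ)) * U = U * diagonal (fun j => (hA.eigenvalues j : ℂ)) := by
    conv_lhs => rw [hA.spectral_theorem, Unitary.conjStarAlgAut_apply]
    rw [mul_assoc, Unitary.coe_star_mul_self, mul_one]
    rfl
  rw [matLog, dif_pos hA, ← diagonal_map_mul_eq_mul_diagonal_map hAU, mul_assoc, hUU, mul_one]

lemma qRelEnt_diagonal {n : Type*} [Fintype n] [DecidableEq n] (p q : n → ℝ) :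
    qRelEnt (diagonal (fun i => (p i : ℂ))) (diagonal (fun i => (q i : ℂ))) =
      ∑ i, p i * (Real.log (p i) - Real.log (q i)) := by
  simp [qRelEnt, matLog_diagonal, trace_diagonal, Complex.re_sum]

lemma ptraceB_diagonal {a b : ℕ} (p : Fin a × Fin b → ℝ) :
    ptraceB (diagonal (fun x => (p x : ℂ))) = diagonal (fun i => ((∑ k, p (i, k) : ℝ) : ℂ)) := by
  ext i j
  by_cases hij : i = j <;> simp [ptraceB, hij]

lemma ptraceA_diagonal {a b : ℕ} (p : Fin a × Fin b → ℝ) :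
    ptraceA (diagonal (fun x => (p x : ℂ))) = diagonal (fun i => ((∑ k, p (k, i) : ℝ) : ℂ)) := by
  ext i j
  by_cases hij : i = j <;> simp [ptraceA, hij]

theorem stmt_11 :
    ∃ ρ σ : Matrix (Fin 2 × Fin 2) (Fin 2 × Fin 2) ℂ,
      ρ.PosSemidef ∧ ρ.trace = 1 ∧ σ.PosDef ∧ σ.trace = 1 ∧
      qRelEnt ρ σ <
        qRelEnt (ptraceB ρ) (ptraceB σ) + qRelEnt (ptraceA ρ) (ptraceA σ) := by
  let p : Fin 2 × Fin 2 → ℝ := fun x => if x = (0, 0) then 1 else 0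
  let q : Fin 2 × Fin 2 → ℝ := fun x => if x.1 = x.2 then 3 / 8 else 1 / 8
  refine ⟨diagonal (fun x => (p x : ℂ)), diagonal (fun x => (q x : ℂ)), ?_, ?_, ?_, ?_, ?_⟩
  · refine posSemidef_diagonal_iff.mpr fun x => Complex.zero_le_real.mpr ?_
    dsimp only [p]; split <;> norm_num
  · simp [p, Fintype.sum_prod_type]
  · refine posDef_diagonal_iff.mpr fun x => Complex.zero_lt_real.mpr ?_
    dsimp only [q]; split <;> norm_num
  · norm_num [q, Fintype.sum_prod_type]
  · rw [ptraceB_diagonal, ptraceB_diagonal, ptraceA_diagonal, ptraceA_diagonal,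
      qRelEnt_diagonal, qRelEnt_diagonal, qRelEnt_diagonal]
    simp only [Fintype.sum_prod_type, Fin.sum_univ_two]
    norm_num [p, q]
    rw [← Real.log_mul (by norm_num) (by norm_num)]
    exact Real.log_lt_log (by norm_num) (by norm_num)
end

section
/- For probability vectors p, q on Fin d with q strictly positive, H(p↓‖q↓) ≤ H(p‖q), i.e. simultaneously sorting both vectors in non-increasing order does not increase the relative entropy. -/
theorem stmt_12 {d : ℕ} (p q : Fin d → ℝ)
    (hp : ∀ i, 0 ≤ p i) (hq : ∀ i, 0 < q i)
    (hps : ∑ i, p i = 1) (hqs : ∑ i, q i = 1) :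
    relEnt (sortDesc p) (sortDesc q) ≤ relEnt p q := by
  classical
  set πp : Equiv.Perm (Fin d) := Fin.revPerm.trans (Tuple.sort p) with hπp
  set πq : Equiv.Perm (Fin d) := Fin.revPerm.trans (Tuple.sort q) with hπq
  have hP : ∀ i, sortDesc p i = p (πp i) := fun i => rfl
  have hQ : ∀ i, sortDesc q i = q (πq i) := fun i => rfl
  have hrev : Antitone (Fin.rev : Fin d → Fin d) := fun i j hij => Fin.rev_le_rev.mpr hij
  have hap : Antitone (sortDesc p) := (Tuple.monotone_sort p).comp_antitone hrev
  have haq : Antitone (sortDesc q) := (Tuple.monotone_sort q).comp_antitone hrev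
  have hqpos : ∀ i, 0 < sortDesc q i := fun i => hq _
  have halq : Antitone (fun i => Real.log (sortDesc q i)) := by
    intro i j hij
    exact Real.log_le_log (hqpos j) (haq hij)
  have hmv : Monovary (sortDesc p) (fun i => Real.log (sortDesc q i)) := by
    intro i j hij
    by_contra h
    push_neg at h
    have hji : j < i := by
      by_contra h'
      push_neg at h'
      exact absurd (halq h') (not_le.mpr hij)
    exact absurd (hap hji.le) (not_le.mpr h)
  have key : ∑ i, p i * Real.log (q i)
      ≤ ∑ i, sortDesc p i * Real.log (sortDesc q i) := by
    have h1 := hmv.sum_smul_comp_perm_le_sum_smul (σ := πq⁻¹ * πp)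
    have h2 : ∑ i, sortDesc p i • Real.log (sortDesc q ((πq⁻¹ * πp) i))
        = ∑ i, p i * Real.log (q i) := by
      have : ∀ i, sortDesc p i • Real.log (sortDesc q ((πq⁻¹ * πp) i))
          = p (πp i) * Real.log (q (πp i)) := by
        intro i
        simp [hP, hQ, smul_eq_mul, Equiv.Perm.mul_apply]
      rw [Finset.sum_congr rfl fun i _ => this i]
      exact Equiv.sum_comp πp (fun j => p j * Real.log (q j))
    rw [h2] at h1
    simpa [smul_eq_mul] using h1
  have hplog : ∑ i, sortDesc p i * Real.log (sortDesc p i)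
      = ∑ i, p i * Real.log (p i) := by
    rw [Finset.sum_congr rfl fun i _ => by rw [hP]]
    exact Equiv.sum_comp πp (fun j => p j * Real.log (p j))
  unfold relEnt
  simp only [mul_sub, Finset.sum_sub_distrib]
  rw [hplog]
  linarith [key]
end

section
/- For probability vectors p, q with q strictly positive, H(p‖q) ≤ H(p↓‖q↑). -/
theorem stmt_13 {d : ℕ} (p q : Fin d → ℝ)
    (hp : ∀ i, 0 ≤ p i) (hq : ∀ i, 0 < q i)
    (hps : ∑ i, p i = 1) (hqs : ∑ i, q i = 1) :
    relEnt p q ≤ relEnt (sortDesc p) (sortAsc q) := by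
  classical
  set σ := Tuple.sort p with hσ
  set τ := Tuple.sort q with hτ
  set e : Equiv.Perm (Fin d) := (Fin.revPerm.trans σ) with he
  have hde : ∀ i, sortDesc p i = p (e i) := fun i => rfl
  have hqa : ∀ i, sortAsc q i = q (τ i) := fun i => rfl
  -- sortDesc p is antitone
  have hanti : Antitone (sortDesc p) := by
    intro i j hij
    exact Tuple.monotone_sort p (Fin.rev_le_rev.mpr hij)
  -- log of sortAsc q is monotone
  have hmono : Monotone (fun i => Real.log (sortAsc q i)) := by
    intro i j hij
    exact Real.log_le_log (hq _) (Tuple.monotone_sort q hij)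
  have hAv : Antivary (sortDesc p) (fun i => Real.log (sortAsc q i)) := by
    intro i j hlt
    by_contra h
    push_neg at h
    exact absurd (hmono (le_of_lt (hanti.reflect_lt h))) (not_le_of_gt hlt)
  -- step 1: p log p term is permutation invariant
  have h1 : ∑ i, sortDesc p i * Real.log (sortDesc p i)
      = ∑ i, p i * Real.log (p i) := by
    simpa [hde] using Equiv.sum_comp e (fun j => p j * Real.log (p j))
  -- step 2: rearrangement inequality
  have h2 : ∑ i, sortDesc p i * Real.log (sortAsc q i)
      ≤ ∑ i, p i * Real.log (q i) := by
    have key := hAv.sum_mul_le_sum_mul_comp_perm (σ := e.trans τ.symm)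
    have hrhs : ∑ i, sortDesc p i * Real.log (sortAsc q ((e.trans τ.symm) i))
        = ∑ i, p i * Real.log (q i) := by
      have : ∀ i, sortDesc p i * Real.log (sortAsc q ((e.trans τ.symm) i))
          = p (e i) * Real.log (q (e i)) := by
        intro i
        simp [hde, hqa, Equiv.trans_apply]
      rw [Finset.sum_congr rfl (fun i _ => this i)]
      exact Equiv.sum_comp e (fun j => p j * Real.log (q j))
    calc ∑ i, sortDesc p i * Real.log (sortAsc q i)
        ≤ ∑ i, sortDesc p i * Real.log (sortAsc q ((e.trans τ.symm) i)) := key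
      _ = ∑ i, p i * Real.log (q i) := hrhs
  unfold relEnt
  simp only [mul_sub, Finset.sum_sub_distrib]
  rw [h1]
  linarith
end
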